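/- arXiv:1909.09763 — 2 statements merged into one kernel-verified Lean document; each statement's English description precedes it below -/
import Mathlib

section
/- As s → 0+, (h(s) − q·s)/s² → q·p_0. -/
/-
Write `T x = ∑ pₙ x^{n+1}`, so that `φ = q + T` and the fixed-point equation gives
`h(s) - q s = s T(h(s))`. On `[0,1]` the series is squeezed as `p₀ x ≤ T x ≤ p₀ x + (1 - q) x²`,
and `q s ≤ h(s) ≤ s (q + (1 - q) s)`; hence `(h(s) - q s)/s² = T(h(s))/s` lies between `q p₀` and
`p₀ (q + (1 - q) s) + (1 - q) s`, which tends to `q p₀`.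
-/

open MeasureTheory ProbabilityTheory Filter Topology

/-- `φ(s) = q + ∑_{n≥0} p_n s^{n+1}`. -/
noncomputable def phi (q : ℝ) (p : ℕ → ℝ) (s : ℝ) : ℝ :=
  q + ∑' n : ℕ, p n * s ^ (n + 1)

/-- `φ'(s) = ∑_{n≥0} (n+1) p_n s^n`. -/
noncomputable def phiDeriv (p : ℕ → ℝ) (s : ℝ) : ℝ :=
  ∑' n : ℕ, (n + 1 : ℝ) * p n * s ^ n

/-- `h s` is the minimal nonnegative solution `x ∈ [0,1]` of `x = s * φ x`, for every
`s ∈ [0,1]`. -/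
def IsMinimalSolution (φ : ℝ → ℝ) (h : ℝ → ℝ) : Prop :=
  ∀ s ∈ Set.Icc (0 : ℝ) 1, h s ∈ Set.Icc (0 : ℝ) 1 ∧ h s = s * φ (h s) ∧
    ∀ y ∈ Set.Icc (0 : ℝ) 1, y = s * φ y → h s ≤ y

section PowerSeries

variable {p : ℕ → ℝ} {x : ℝ}

lemma summable_mul_pow_succ (hp : ∀ n, 0 ≤ p n) (hpsum : Summable p) (hx0 : 0 ≤ x)
    (hx1 : x ≤ 1) : Summable (fun n => p n * x ^ (n + 1)) :=
  hpsum.of_nonneg_of_le (fun n => mul_nonneg (hp n) (pow_nonneg hx0 _))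
    (fun n => mul_le_of_le_one_right (hp n) (pow_le_one₀ hx0 hx1))

lemma mul_le_tsum_mul_pow_succ (hp : ∀ n, 0 ≤ p n) (hpsum : Summable p) (hx0 : 0 ≤ x)
    (hx1 : x ≤ 1) : p 0 * x ≤ ∑' n, p n * x ^ (n + 1) := by
  simpa using (summable_mul_pow_succ hp hpsum hx0 hx1).le_tsum 0
    (fun n _ => mul_nonneg (hp n) (pow_nonneg hx0 _))

lemma tsum_mul_pow_succ_le (hp : ∀ n, 0 ≤ p n) (hpsum : Summable p) (hx0 : 0 ≤ x)
    (hx1 : x ≤ 1) : ∑' n, p n * x ^ (n + 1) ≤ (∑' n, p n) * x := by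
  rw [← tsum_mul_right]
  refine (summable_mul_pow_succ hp hpsum hx0 hx1).tsum_le_tsum (fun n => ?_) (hpsum.mul_right x)
  exact mul_le_mul_of_nonneg_left (pow_le_of_le_one hx0 hx1 n.succ_ne_zero) (hp n)

lemma tsum_mul_pow_succ_le_add_sq (hp : ∀ n, 0 ≤ p n) (hpsum : Summable p) (hx0 : 0 ≤ x)
    (hx1 : x ≤ 1) : ∑' n, p n * x ^ (n + 1) ≤ p 0 * x + (∑' n, p n) * x ^ 2 := by
  have hsum := summable_mul_pow_succ hp hpsum hx0 hx1
  have htail : ∑' n, p (n + 1) * x ^ (n + 1 + 1) ≤ (∑' n, p (n + 1)) * x ^ 2 := by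
    rw [← tsum_mul_right]
    refine ((summable_nat_add_iff 1).2 hsum).tsum_le_tsum (fun n => ?_)
      (((summable_nat_add_iff 1).2 hpsum).mul_right _)
    exact mul_le_mul_of_nonneg_left (pow_le_pow_of_le_one hx0 hx1 (by omega)) (hp (n + 1))
  have hp_tail : ∑' n, p (n + 1) ≤ ∑' n, p n := by
    linarith [hpsum.tsum_eq_zero_add, hp 0]
  rw [hsum.tsum_eq_zero_add, zero_add, pow_one]
  linarith [mul_le_mul_of_nonneg_right hp_tail (sq_nonneg x)]

end PowerSeries

section FixedPoint

variable {q : ℝ} {p : ℕ → ℝ} {s x : ℝ}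

lemma sub_mul_eq_mul_tsum_of_eq_mul_phi (hfix : x = s * phi q p x) :
    x - q * s = s * ∑' n, p n * x ^ (n + 1) := by
  nth_rw 1 [hfix]
  rw [phi]
  ring

lemma mul_le_div_sq_of_eq_mul_phi (hp : ∀ n, 0 ≤ p n) (hpsum : Summable p) (hs : 0 < s)
    (hx0 : 0 ≤ x) (hx1 : x ≤ 1) (hfix : x = s * phi q p x) :
    q * p 0 ≤ (x - q * s) / s ^ 2 := by
  have hT := mul_le_tsum_mul_pow_succ hp hpsum hx0 hx1
  have hsub := sub_mul_eq_mul_tsum_of_eq_mul_phi hfix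
  have hqs : q * s ≤ x := by nlinarith [mul_nonneg (hp 0) hx0]
  rw [le_div_iff₀ (by positivity), hsub]
  nlinarith [mul_le_mul_of_nonneg_left hqs (hp 0)]

lemma div_sq_le_of_eq_mul_phi (hp : ∀ n, 0 ≤ p n) (hpsum : Summable p)
    (htotal : q + ∑' n, p n = 1) (hs : 0 < s) (hx0 : 0 ≤ x) (hx1 : x ≤ 1)
    (hfix : x = s * phi q p x) :
    (x - q * s) / s ^ 2 ≤ p 0 * (q + (1 - q) * s) + (1 - q) * s := by
  have hS : ∑' n, p n = 1 - q := by linarith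
  have hS0 : 0 ≤ 1 - q := hS ▸ tsum_nonneg hp
  have hT_le := tsum_mul_pow_succ_le hp hpsum hx0 hx1
  have hT_sq := tsum_mul_pow_succ_le_add_sq hp hpsum hx0 hx1
  rw [hS] at hT_le hT_sq
  have hsub := sub_mul_eq_mul_tsum_of_eq_mul_phi hfix
  have hxs : x ≤ s := by nlinarith [mul_le_mul_of_nonneg_left hx1 hS0]
  have hx_le : x ≤ s * (q + (1 - q) * s) := by
    nlinarith [mul_le_mul_of_nonneg_left hxs hS0]
  have hT : ∑' n, p n * x ^ (n + 1) ≤ p 0 * (s * (q + (1 - q) * s)) + (1 - q) * s ^ 2 := by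
    nlinarith [mul_le_mul_of_nonneg_left hx_le (hp 0),
      mul_le_mul_of_nonneg_left (pow_le_pow_left₀ hx0 hxs 2) hS0]
  rw [div_le_iff₀ (by positivity), hsub]
  nlinarith [mul_le_mul_of_nonneg_left hT hs.le]

end FixedPoint

theorem h_second_order_general
    (q : ℝ) (p : ℕ → ℝ) (hp : ∀ n, 0 ≤ p n)
    (hpsum : Summable p) (htotal : q + ∑' n : ℕ, p n = 1)
    (h : ℝ → ℝ) (hmin : IsMinimalSolution (phi q p) h)
:
    Tendsto (fun s => (h s - q * s) / s ^ 2) (𝓝[>] (0 : ℝ)) (𝓝 (q * p 0)) := by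
  have hupper : Tendsto (fun s => p 0 * (q + (1 - q) * s) + (1 - q) * s) (𝓝[>] 0)
      (𝓝 (q * p 0)) := by
    have hcont : Continuous fun s : ℝ => p 0 * (q + (1 - q) * s) + (1 - q) * s := by fun_prop
    simpa [mul_comm] using hcont.tendsto 0 |>.mono_left nhdsWithin_le_nhds
  have hsmall : ∀ᶠ s in 𝓝[>] (0 : ℝ), s ∈ Set.Ioo 0 1 :=
    Ioo_mem_nhdsGT_of_mem ⟨le_rfl, one_pos⟩
  refine tendsto_of_tendsto_of_tendsto_of_le_of_le' tendsto_const_nhds hupper ?_ ?_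
  all_goals
    filter_upwards [hsmall] with s ⟨hs0, hs1⟩
    obtain ⟨⟨hx0, hx1⟩, hfix, -⟩ := hmin s ⟨hs0.le, hs1.le⟩
  · exact mul_le_div_sq_of_eq_mul_phi hp hpsum hs0 hx0 hx1 hfix
  · exact div_sq_le_of_eq_mul_phi hp hpsum htotal hs0 hx0 hx1 hfix

/-- Lemma 1(3): `(h(s) − q s)/s² → q p₀` as `s → 0+`. -/
theorem h_second_order
    (q : ℝ) (p : ℕ → ℝ) (hq : 0 < q) (hp : ∀ n, 0 ≤ p n)
    (hpsum : Summable p) (htotal : q + ∑' n : ℕ, p n = 1) (hp0 : p 0 < 1)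
    (hmoment : Summable (fun n : ℕ => (n + 1 : ℝ) * p n))
    (hcrit : ∑' n : ℕ, (n + 1 : ℝ) * p n = 1)
    (h : ℝ → ℝ) (hmin : IsMinimalSolution (phi q p) h)
:
    Tendsto (fun s => (h s - q * s) / s ^ 2) (𝓝[>] (0 : ℝ)) (𝓝 (q * p 0)) :=
  h_second_order_general q p hp hpsum htotal h hmin
end

section
/- If φ″(1) < ∞ and σ = √(φ″(1)), then lim_{s→1−} (1 − s·φ′(h(s)))/√(1−s) = √2·σ. -/
open MeasureTheory ProbabilityTheory Filter Topology

/-- `F(x) = (1-φ(x))/(1-x)` as a power series. -/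
noncomputable def Fser (p : ℕ → ℝ) (x : ℝ) : ℝ :=
  ∑' n : ℕ, p n * ∑ k ∈ Finset.range (n + 1), x ^ k

/-- `G(x) = (1-φ'(x))/(1-x)` as a power series. -/
noncomputable def Gser (p : ℕ → ℝ) (x : ℝ) : ℝ :=
  ∑' n : ℕ, (n + 1 : ℝ) * p n * ∑ k ∈ Finset.range n, x ^ k

/-- `H(x) = (1-F(x))/(1-x)` as a power series. -/
noncomputable def Hser (p : ℕ → ℝ) (x : ℝ) : ℝ :=
  ∑' n : ℕ, p n * ∑ k ∈ Finset.range (n + 1), ∑ j ∈ Finset.range k, x ^ j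

section Aux

variable {p : ℕ → ℝ} {x : ℝ}

lemma sum_pow_nonneg (hx0 : 0 ≤ x) (m : ℕ) : 0 ≤ ∑ k ∈ Finset.range m, x ^ k :=
  Finset.sum_nonneg fun _ _ => pow_nonneg hx0 _

lemma sum_pow_le (hx0 : 0 ≤ x) (hx1 : x ≤ 1) (m : ℕ) :
    ∑ k ∈ Finset.range m, x ^ k ≤ m := by
  calc ∑ k ∈ Finset.range m, x ^ k ≤ ∑ k ∈ Finset.range m, (1 : ℝ) :=
        Finset.sum_le_sum fun k _ => pow_le_one₀ hx0 hx1
    _ = m := by simp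

lemma dsum_nonneg (hx0 : 0 ≤ x) (m : ℕ) :
    0 ≤ ∑ k ∈ Finset.range m, ∑ j ∈ Finset.range k, x ^ j :=
  Finset.sum_nonneg fun k _ => sum_pow_nonneg hx0 k

lemma dsum_le (hx0 : 0 ≤ x) (hx1 : x ≤ 1) (n : ℕ) :
    ∑ k ∈ Finset.range (n + 1), ∑ j ∈ Finset.range k, x ^ j ≤ (n : ℝ) * (n + 1) := by
  calc ∑ k ∈ Finset.range (n + 1), ∑ j ∈ Finset.range k, x ^ j
      ≤ ∑ k ∈ Finset.range (n + 1), (n : ℝ) := by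
        refine Finset.sum_le_sum fun k hk => ?_
        have hk' : k ≤ n := Nat.lt_succ_iff.mp (Finset.mem_range.mp hk)
        calc ∑ j ∈ Finset.range k, x ^ j ≤ (k : ℝ) := sum_pow_le hx0 hx1 k
          _ ≤ (n : ℝ) := by exact_mod_cast hk'
    _ = (n : ℝ) * (n + 1) := by simp [mul_comm]

lemma summable_F (hp : ∀ n, 0 ≤ p n)
    (hmoment : Summable (fun n : ℕ => (n + 1 : ℝ) * p n)) (hx0 : 0 ≤ x) (hx1 : x ≤ 1) :
    Summable (fun n : ℕ => p n * ∑ k ∈ Finset.range (n + 1), x ^ k) := by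
  refine Summable.of_nonneg_of_le (fun n => mul_nonneg (hp n) (sum_pow_nonneg hx0 _))
    (fun n => ?_) hmoment
  calc p n * ∑ k ∈ Finset.range (n + 1), x ^ k ≤ p n * (n + 1 : ℝ) := by
        refine mul_le_mul_of_nonneg_left ?_ (hp n)
        simpa using sum_pow_le hx0 hx1 (n + 1)
    _ = (n + 1 : ℝ) * p n := mul_comm _ _

lemma summable_G (hp : ∀ n, 0 ≤ p n)
    (hvar : Summable (fun n : ℕ => (n : ℝ) * (n + 1) * p n)) (hx0 : 0 ≤ x) (hx1 : x ≤ 1) :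
    Summable (fun n : ℕ => (n + 1 : ℝ) * p n * ∑ k ∈ Finset.range n, x ^ k) := by
  refine Summable.of_nonneg_of_le
    (fun n => mul_nonneg (mul_nonneg (by positivity) (hp n)) (sum_pow_nonneg hx0 _))
    (fun n => ?_) hvar
  calc (n + 1 : ℝ) * p n * ∑ k ∈ Finset.range n, x ^ k ≤ (n + 1 : ℝ) * p n * n :=
        mul_le_mul_of_nonneg_left (sum_pow_le hx0 hx1 n) (mul_nonneg (by positivity) (hp n))
    _ = (n : ℝ) * (n + 1) * p n := by ring

lemma summable_H (hp : ∀ n, 0 ≤ p n)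
    (hvar : Summable (fun n : ℕ => (n : ℝ) * (n + 1) * p n)) (hx0 : 0 ≤ x) (hx1 : x ≤ 1) :
    Summable (fun n : ℕ =>
      p n * ∑ k ∈ Finset.range (n + 1), ∑ j ∈ Finset.range k, x ^ j) := by
  refine Summable.of_nonneg_of_le (fun n => mul_nonneg (hp n) (dsum_nonneg hx0 _))
    (fun n => ?_) hvar
  calc p n * ∑ k ∈ Finset.range (n + 1), ∑ j ∈ Finset.range k, x ^ j
      ≤ p n * ((n : ℝ) * (n + 1)) := mul_le_mul_of_nonneg_left (dsum_le hx0 hx1 n) (hp n)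
    _ = (n : ℝ) * (n + 1) * p n := by ring

lemma summable_pow (hp : ∀ n, 0 ≤ p n) (hpsum : Summable p) (hx0 : 0 ≤ x) (hx1 : x ≤ 1) :
    Summable (fun n : ℕ => p n * x ^ (n + 1)) := by
  refine Summable.of_nonneg_of_le (fun n => mul_nonneg (hp n) (pow_nonneg hx0 _))
    (fun n => ?_) hpsum
  simpa using mul_le_mul_of_nonneg_left (pow_le_one₀ hx0 hx1 (n := n + 1)) (hp n)

lemma summable_dpow (hp : ∀ n, 0 ≤ p n)
    (hmoment : Summable (fun n : ℕ => (n + 1 : ℝ) * p n)) (hx0 : 0 ≤ x) (hx1 : x ≤ 1) :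
    Summable (fun n : ℕ => (n + 1 : ℝ) * p n * x ^ n) := by
  refine Summable.of_nonneg_of_le
    (fun n => mul_nonneg (mul_nonneg (by positivity) (hp n)) (pow_nonneg hx0 _))
    (fun n => ?_) hmoment
  simpa using mul_le_mul_of_nonneg_left (pow_le_one₀ hx0 hx1 (n := n))
    (mul_nonneg (by positivity : (0:ℝ) ≤ (n+1:ℝ)) (hp n))

lemma geom_fact (x : ℝ) (m : ℕ) : (1 - x) * ∑ k ∈ Finset.range m, x ^ k = 1 - x ^ m := by
  linear_combination (-1 : ℝ) * geom_sum_mul x m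

lemma F_identity (q : ℝ) (hp : ∀ n, 0 ≤ p n) (hpsum : Summable p)
    (hmoment : Summable (fun n : ℕ => (n + 1 : ℝ) * p n))
    (htotal : q + ∑' n : ℕ, p n = 1) (hx0 : 0 ≤ x) (hx1 : x ≤ 1) :
    (1 - x) * Fser p x = 1 - phi q p x := by
  have hsx := summable_pow hp hpsum hx0 hx1
  calc (1 - x) * Fser p x
      = ∑' n : ℕ, (1 - x) * (p n * ∑ k ∈ Finset.range (n + 1), x ^ k) := tsum_mul_left.symm
    _ = ∑' n : ℕ, (p n - p n * x ^ (n + 1)) := by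
        refine tsum_congr fun n => ?_
        have := geom_fact x (n + 1)
        linear_combination p n * this
    _ = (∑' n : ℕ, p n) - ∑' n : ℕ, p n * x ^ (n + 1) := hpsum.tsum_sub hsx
    _ = 1 - phi q p x := by unfold phi; linarith

lemma G_identity (hp : ∀ n, 0 ≤ p n)
    (hmoment : Summable (fun n : ℕ => (n + 1 : ℝ) * p n))
    (hvar : Summable (fun n : ℕ => (n : ℝ) * (n + 1) * p n))
    (hcrit : ∑' n : ℕ, (n + 1 : ℝ) * p n = 1) (hx0 : 0 ≤ x) (hx1 : x ≤ 1) :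
    (1 - x) * Gser p x = 1 - phiDeriv p x := by
  have hsx := summable_dpow hp hmoment hx0 hx1
  calc (1 - x) * Gser p x
      = ∑' n : ℕ, (1 - x) * ((n + 1 : ℝ) * p n * ∑ k ∈ Finset.range n, x ^ k) :=
        tsum_mul_left.symm
    _ = ∑' n : ℕ, ((n + 1 : ℝ) * p n - (n + 1 : ℝ) * p n * x ^ n) := by
        refine tsum_congr fun n => ?_
        have := geom_fact x n
        linear_combination ((n:ℝ) + 1) * p n * this
    _ = (∑' n : ℕ, (n + 1 : ℝ) * p n) - ∑' n : ℕ, (n + 1 : ℝ) * p n * x ^ n :=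
        hmoment.tsum_sub hsx
    _ = 1 - phiDeriv p x := by unfold phiDeriv; linarith

lemma H_identity (hp : ∀ n, 0 ≤ p n)
    (hmoment : Summable (fun n : ℕ => (n + 1 : ℝ) * p n))
    (hvar : Summable (fun n : ℕ => (n : ℝ) * (n + 1) * p n))
    (hcrit : ∑' n : ℕ, (n + 1 : ℝ) * p n = 1) (hx0 : 0 ≤ x) (hx1 : x ≤ 1) :
    (1 - x) * Hser p x = 1 - Fser p x := by
  have hsF := summable_F hp hmoment hx0 hx1
  have inner : ∀ m : ℕ, (1 - x) * ∑ k ∈ Finset.range m, ∑ j ∈ Finset.range k, x ^ j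
      = (m : ℝ) - ∑ k ∈ Finset.range m, x ^ k := by
    intro m
    rw [Finset.mul_sum]
    rw [show (∑ k ∈ Finset.range m, (1 - x) * ∑ j ∈ Finset.range k, x ^ j)
        = ∑ k ∈ Finset.range m, ((1:ℝ) - x ^ k) from
      Finset.sum_congr rfl fun k _ => geom_fact x k]
    rw [Finset.sum_sub_distrib]
    simp
  calc (1 - x) * Hser p x
      = ∑' n : ℕ, (1 - x) * (p n * ∑ k ∈ Finset.range (n + 1), ∑ j ∈ Finset.range k, x ^ j) :=
        tsum_mul_left.symm
    _ = ∑' n : ℕ, ((n + 1 : ℝ) * p n - p n * ∑ k ∈ Finset.range (n + 1), x ^ k) := by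
        refine tsum_congr fun n => ?_
        have := inner (n + 1)
        push_cast at this
        linear_combination p n * this
    _ = (∑' n : ℕ, (n + 1 : ℝ) * p n) - ∑' n : ℕ, p n * ∑ k ∈ Finset.range (n + 1), x ^ k :=
        hmoment.tsum_sub hsF
    _ = 1 - Fser p x := by unfold Fser; linarith

lemma contOn_F (hp : ∀ n, 0 ≤ p n) (hmoment : Summable (fun n : ℕ => (n + 1 : ℝ) * p n)) :
    ContinuousOn (Fser p) (Set.Icc (0:ℝ) 1) := by
  refine continuousOn_tsum (fun n => (Continuous.continuousOn (by continuity))) hmoment ?_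
  intro n y hy
  rw [Real.norm_eq_abs, abs_of_nonneg (mul_nonneg (hp n) (sum_pow_nonneg hy.1 _))]
  calc p n * ∑ k ∈ Finset.range (n + 1), y ^ k ≤ p n * (n + 1 : ℝ) := by
        refine mul_le_mul_of_nonneg_left ?_ (hp n)
        simpa using sum_pow_le hy.1 hy.2 (n + 1)
    _ = (n + 1 : ℝ) * p n := mul_comm _ _

lemma contOn_G (hp : ∀ n, 0 ≤ p n) (hvar : Summable (fun n : ℕ => (n : ℝ) * (n + 1) * p n)) :
    ContinuousOn (Gser p) (Set.Icc (0:ℝ) 1) := by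
  refine continuousOn_tsum (fun n => (Continuous.continuousOn (by continuity))) hvar ?_
  intro n y hy
  rw [Real.norm_eq_abs, abs_of_nonneg (mul_nonneg (mul_nonneg (by positivity) (hp n))
    (sum_pow_nonneg hy.1 _))]
  calc (n + 1 : ℝ) * p n * ∑ k ∈ Finset.range n, y ^ k ≤ (n + 1 : ℝ) * p n * n :=
        mul_le_mul_of_nonneg_left (sum_pow_le hy.1 hy.2 n)
          (mul_nonneg (by positivity) (hp n))
    _ = (n : ℝ) * (n + 1) * p n := by ring

lemma contOn_H (hp : ∀ n, 0 ≤ p n) (hvar : Summable (fun n : ℕ => (n : ℝ) * (n + 1) * p n)) :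
    ContinuousOn (Hser p) (Set.Icc (0:ℝ) 1) := by
  refine continuousOn_tsum (fun n => (Continuous.continuousOn (by continuity))) hvar ?_
  intro n y hy
  rw [Real.norm_eq_abs, abs_of_nonneg (mul_nonneg (hp n) (dsum_nonneg hy.1 _))]
  calc p n * ∑ k ∈ Finset.range (n + 1), ∑ j ∈ Finset.range k, y ^ j
      ≤ p n * ((n : ℝ) * (n + 1)) := mul_le_mul_of_nonneg_left (dsum_le hy.1 hy.2 n) (hp n)
    _ = (n : ℝ) * (n + 1) * p n := by ring

lemma contOn_phi (q : ℝ) (hp : ∀ n, 0 ≤ p n) (hpsum : Summable p) :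
    ContinuousOn (phi q p) (Set.Icc (0:ℝ) 1) := by
  unfold phi
  refine continuousOn_const.add ?_
  refine continuousOn_tsum (fun n => (Continuous.continuousOn (by continuity))) hpsum ?_
  intro n y hy
  rw [Real.norm_eq_abs, abs_of_nonneg (mul_nonneg (hp n) (pow_nonneg hy.1 _))]
  simpa using mul_le_mul_of_nonneg_left (pow_le_one₀ hy.1 hy.2 (n := n + 1)) (hp n)

lemma contOn_phiDeriv (hp : ∀ n, 0 ≤ p n)
    (hmoment : Summable (fun n : ℕ => (n + 1 : ℝ) * p n)) :
    ContinuousOn (phiDeriv p) (Set.Icc (0:ℝ) 1) := by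
  unfold phiDeriv
  refine continuousOn_tsum (fun n => (Continuous.continuousOn (by continuity))) hmoment ?_
  intro n y hy
  rw [Real.norm_eq_abs, abs_of_nonneg (mul_nonneg (mul_nonneg (by positivity) (hp n))
    (pow_nonneg hy.1 _))]
  simpa using mul_le_mul_of_nonneg_left (pow_le_one₀ hy.1 hy.2 (n := n))
    (mul_nonneg (by positivity : (0:ℝ) ≤ (n+1:ℝ)) (hp n))

lemma Fser_one (hmoment : Summable (fun n : ℕ => (n + 1 : ℝ) * p n)) :
    Fser p 1 = ∑' n : ℕ, (n + 1 : ℝ) * p n := by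
  unfold Fser
  refine tsum_congr fun n => ?_
  simp [mul_comm]

lemma Gser_one : Gser p 1 = ∑' n : ℕ, (n : ℝ) * (n + 1) * p n := by
  unfold Gser
  refine tsum_congr fun n => ?_
  simp
  ring

lemma Hser_one : Hser p 1 = (∑' n : ℕ, (n : ℝ) * (n + 1) * p n) / 2 := by
  unfold Hser
  rw [← tsum_div_const]
  refine tsum_congr fun n => ?_
  have hid : ∑ k ∈ Finset.range (n + 1), (k : ℝ) = (n : ℝ) * (n + 1) / 2 := by
    have h2 := Finset.sum_range_id_mul_two (n + 1)
    have h3 : ((∑ i ∈ Finset.range (n + 1), i : ℕ) : ℝ) * 2 = ((n + 1 : ℕ) : ℝ) * (n : ℝ) := by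
      exact_mod_cast congrArg (Nat.cast (R := ℝ)) h2
    push_cast at h3 ⊢
    linarith
  simp only [one_pow, Finset.sum_const, nsmul_eq_mul, mul_one, Finset.card_range]
  rw [hid]
  ring

lemma phi_one (q : ℝ) (htotal : q + ∑' n : ℕ, p n = 1) : phi q p 1 = 1 := by
  unfold phi
  simpa using htotal

lemma phiDeriv_one (hcrit : ∑' n : ℕ, (n + 1 : ℝ) * p n = 1) : phiDeriv p 1 = 1 := by
  unfold phiDeriv
  simpa using hcrit

lemma phi_le_one (q : ℝ) (hp : ∀ n, 0 ≤ p n) (hpsum : Summable p)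
    (htotal : q + ∑' n : ℕ, p n = 1) (hx0 : 0 ≤ x) (hx1 : x ≤ 1) :
    phi q p x ≤ 1 := by
  unfold phi
  have : ∑' n : ℕ, p n * x ^ (n + 1) ≤ ∑' n : ℕ, p n := by
    refine Summable.tsum_le_tsum (fun n => ?_) (summable_pow hp hpsum hx0 hx1) hpsum
    simpa using mul_le_mul_of_nonneg_left (pow_le_one₀ hx0 hx1 (n := n + 1)) (hp n)
  linarith

lemma Hser_ge (hp : ∀ n, 0 ≤ p n)
    (hvar : Summable (fun n : ℕ => (n : ℝ) * (n + 1) * p n)) (hx0 : 0 ≤ x) (hx1 : x ≤ 1) :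
    ∑' n : ℕ, (n : ℝ) * p n ≤ Hser p x := by
  have hsumc : Summable (fun n : ℕ => (n : ℝ) * p n) := by
    refine Summable.of_nonneg_of_le (fun n => mul_nonneg (by positivity) (hp n))
      (fun n => ?_) hvar
    have : (n : ℝ) ≤ (n : ℝ) * (n + 1) := by nlinarith [(by positivity : (0:ℝ) ≤ (n:ℝ))]
    exact mul_le_mul_of_nonneg_right this (hp n)
  refine Summable.tsum_le_tsum (fun n => ?_) hsumc (summable_H hp hvar hx0 hx1)
  -- show (n : ℝ) * p n ≤ p n * ∑ k < n+1, ∑ j < k, x^j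
  have hdd : (n : ℝ) ≤ ∑ k ∈ Finset.range (n + 1), ∑ j ∈ Finset.range k, x ^ j := by
    rw [Finset.sum_range_succ']
    have h1 : ∀ k : ℕ, (1:ℝ) ≤ ∑ j ∈ Finset.range (k + 1), x ^ j := by
      intro k
      rw [Finset.sum_range_succ']
      have : 0 ≤ ∑ i ∈ Finset.range k, x ^ (i + 1) :=
        Finset.sum_nonneg fun i _ => pow_nonneg hx0 _
      simp only [pow_zero]
      linarith
    have h2 : (n : ℝ) ≤ ∑ k ∈ Finset.range n, ∑ j ∈ Finset.range (k + 1), x ^ j := by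
      calc (n : ℝ) = ∑ _k ∈ Finset.range n, (1:ℝ) := by simp
        _ ≤ _ := Finset.sum_le_sum fun k _ => h1 k
    simpa using h2
  calc (n : ℝ) * p n = p n * n := mul_comm _ _
    _ ≤ p n * ∑ k ∈ Finset.range (n + 1), ∑ j ∈ Finset.range k, x ^ j :=
        mul_le_mul_of_nonneg_left hdd (hp n)

end Aux

set_option maxHeartbeats 1000000 in
/-- Lemma 1(4): if `φ''(1) < ∞` and `σ = √(φ''(1))`, then
`(1 − s φ'(h(s)))/√(1−s) → √2 σ` as `s → 1−`. -/
theorem h_assumption_H_finite_variance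
    (q : ℝ) (p : ℕ → ℝ) (hq : 0 < q) (hp : ∀ n, 0 ≤ p n)
    (hpsum : Summable p) (htotal : q + ∑' n : ℕ, p n = 1) (hp0 : p 0 < 1)
    (hmoment : Summable (fun n : ℕ => (n + 1 : ℝ) * p n))
    (hcrit : ∑' n : ℕ, (n + 1 : ℝ) * p n = 1)
    (hvar : Summable (fun n : ℕ => (n : ℝ) * (n + 1) * p n))
    (σ : ℝ) (hσ : σ = Real.sqrt (∑' n : ℕ, (n : ℝ) * (n + 1) * p n))
    (h : ℝ → ℝ) (hmin : IsMinimalSolution (phi q p) h)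
:
    Tendsto (fun s => (1 - s * phiDeriv p (h s)) / Real.sqrt (1 - s))
      (𝓝[<] (1 : ℝ)) (𝓝 (Real.sqrt 2 * σ)) := by
  -- there is some m ≥ 1 with p m > 0
  have hex : ∃ m : ℕ, 1 ≤ m ∧ 0 < p m := by
    by_contra hno
    push_neg at hno
    have hz : ∀ n : ℕ, n ≠ 0 → (n + 1 : ℝ) * p n = 0 := by
      intro n hn
      have h1 : 1 ≤ n := Nat.one_le_iff_ne_zero.mpr hn
      have := hno n h1
      have : p n = 0 := le_antisymm this (hp n)
      simp [this]
    have := tsum_eq_single (L := SummationFilter.unconditional ℕ) (f := fun n : ℕ => (n + 1 : ℝ) * p n) 0 hz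
    rw [hcrit] at this
    simp at this
    linarith
  obtain ⟨m, hm1, hpm⟩ := hex
  set σ2 : ℝ := ∑' n : ℕ, (n : ℝ) * (n + 1) * p n with hσ2
  have hσ2pos : 0 < σ2 := by
    refine Summable.tsum_pos hvar (fun n => mul_nonneg (mul_nonneg (by positivity) (by positivity)) (hp n)) m ?_
    have hm1' : (1:ℝ) ≤ (m:ℝ) := by exact_mod_cast hm1
    exact mul_pos (mul_pos (by linarith) (by linarith)) hpm
  set c : ℝ := ∑' n : ℕ, (n : ℝ) * p n with hc
  have hcpos : 0 < c := by
    have hsumc : Summable (fun n : ℕ => (n : ℝ) * p n) := by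
      refine Summable.of_nonneg_of_le (fun n => mul_nonneg (by positivity) (hp n))
        (fun n => ?_) hvar
      have : (n : ℝ) ≤ (n : ℝ) * (n + 1) := by nlinarith [(by positivity : (0:ℝ) ≤ (n:ℝ))]
      exact mul_le_mul_of_nonneg_right this (hp n)
    refine Summable.tsum_pos hsumc (fun n => mul_nonneg (by positivity) (hp n)) m ?_
    have hm1' : (1:ℝ) ≤ (m:ℝ) := by exact_mod_cast hm1
    exact mul_pos (by linarith) hpm
  have hσpos : 0 < σ := hσ ▸ Real.sqrt_pos.mpr hσ2pos
  -- basic facts about h s for s ∈ Ioo 0 1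
  have hIoo : Set.Ioo (0:ℝ) 1 ∈ 𝓝[<] (1:ℝ) :=
    Ioo_mem_nhdsLT_of_mem ⟨zero_lt_one, le_refl 1⟩
  -- the key exact identity: (1-s) * φ(h s) = (1 - h s)^2 * H(h s), for s ∈ Ioo 0 1
  have key : ∀ s ∈ Set.Ioo (0:ℝ) 1,
      (1 - s) * phi q p (h s) = (1 - h s)^2 * Hser p (h s) := by
    intro s hs
    obtain ⟨hx, heq, -⟩ := hmin s ⟨hs.1.le, hs.2.le⟩
    have e1 := F_identity q hp hpsum hmoment htotal hx.1 hx.2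
    have e2 := H_identity hp hmoment hvar hcrit hx.1 hx.2
    linear_combination heq + e1 - (1 - h s) * e2
  -- squeeze: h s → 1 as s → 1⁻
  have hbound : ∀ s ∈ Set.Ioo (0:ℝ) 1, 1 - Real.sqrt ((1 - s) / c) ≤ h s := by
    intro s hs
    obtain ⟨hx, heq, -⟩ := hmin s ⟨hs.1.le, hs.2.le⟩
    have hH := Hser_ge hp hvar hx.1 hx.2
    have hφ1 := phi_le_one q hp hpsum htotal hx.1 hx.2
    have hsq : (1 - h s)^2 ≤ (1 - s) / c := by
      rw [le_div_iff₀ hcpos]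
      have hk := key s hs
      nlinarith [hH, hφ1, hs.2, sq_nonneg (1 - h s)]
    have : 1 - h s ≤ Real.sqrt ((1 - s) / c) := by
      calc 1 - h s = Real.sqrt ((1 - h s)^2) := (Real.sqrt_sq (by linarith [hx.2])).symm
        _ ≤ Real.sqrt ((1 - s) / c) := Real.sqrt_le_sqrt hsq
    linarith
  have htends_h : Tendsto h (𝓝[<] (1:ℝ)) (𝓝 1) := by
    have hlow : Tendsto (fun s : ℝ => 1 - Real.sqrt ((1 - s) / c)) (𝓝[<] (1:ℝ)) (𝓝 1) := by
      have hc0 : Continuous (fun s : ℝ => 1 - Real.sqrt ((1 - s) / c)) := by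
        continuity
      have := (hc0.tendsto 1).mono_left (nhdsWithin_le_nhds (s := Set.Iio (1:ℝ)))
      simpa using this
    have hhigh : Tendsto (fun _ : ℝ => (1:ℝ)) (𝓝[<] (1:ℝ)) (𝓝 1) := tendsto_const_nhds
    refine tendsto_of_tendsto_of_tendsto_of_le_of_le' hlow hhigh ?_ ?_
    · filter_upwards [hIoo] with s hs using hbound s hs
    · filter_upwards [hIoo] with s hs using (hmin s ⟨hs.1.le, hs.2.le⟩).1.2
  have htends_hI : Tendsto h (𝓝[<] (1:ℝ)) (𝓝[Set.Icc (0:ℝ) 1] 1) := by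
    rw [tendsto_nhdsWithin_iff]
    refine ⟨htends_h, ?_⟩
    filter_upwards [hIoo] with s hs using (hmin s ⟨hs.1.le, hs.2.le⟩).1
  have h1mem : (1:ℝ) ∈ Set.Icc (0:ℝ) 1 := ⟨zero_le_one, le_refl 1⟩
  -- limits of the compositions
  have hφlim : Tendsto (fun s => phi q p (h s)) (𝓝[<] (1:ℝ)) (𝓝 1) := by
    have := ((contOn_phi q hp hpsum) 1 h1mem).tendsto.comp htends_hI
    rwa [phi_one q htotal] at this
  have hHlim : Tendsto (fun s => Hser p (h s)) (𝓝[<] (1:ℝ)) (𝓝 (σ2 / 2)) := by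
    have := ((contOn_H hp hvar) 1 h1mem).tendsto.comp htends_hI
    rwa [Hser_one] at this
  have hGlim : Tendsto (fun s => Gser p (h s)) (𝓝[<] (1:ℝ)) (𝓝 σ2) := by
    have := ((contOn_G hp hvar) 1 h1mem).tendsto.comp htends_hI
    rwa [Gser_one] at this
  have hDlim : Tendsto (fun s => phiDeriv p (h s)) (𝓝[<] (1:ℝ)) (𝓝 1) := by
    have := ((contOn_phiDeriv hp hmoment) 1 h1mem).tendsto.comp htends_hI
    rwa [phiDeriv_one hcrit] at this
  have hsqrt1s : Tendsto (fun s : ℝ => Real.sqrt (1 - s)) (𝓝[<] (1:ℝ)) (𝓝 0) := by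
    have hc0 : Continuous (fun s : ℝ => Real.sqrt (1 - s)) := by continuity
    have := (hc0.tendsto 1).mono_left (nhdsWithin_le_nhds (s := Set.Iio (1:ℝ)))
    simpa using this
  -- the limit of the model function
  have hLlim : Tendsto (fun s =>
      Real.sqrt (phi q p (h s) / Hser p (h s)) * Gser p (h s)
        + Real.sqrt (1 - s) * phiDeriv p (h s))
      (𝓝[<] (1:ℝ)) (𝓝 (Real.sqrt (1 / (σ2 / 2)) * σ2 + 0 * 1)) := by
    refine Tendsto.add (Tendsto.mul ?_ hGlim) (Tendsto.mul hsqrt1s hDlim)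
    exact (Real.continuous_sqrt.tendsto _).comp (hφlim.div hHlim (by positivity))
  have hval : Real.sqrt (1 / (σ2 / 2)) * σ2 + 0 * 1 = Real.sqrt 2 * σ := by
    have h1 : (1 : ℝ) / (σ2 / 2) = 2 / σ2 := by field_simp
    rw [h1, zero_mul, add_zero]
    rw [show (2:ℝ) / σ2 = 2 * σ2⁻¹ by ring, Real.sqrt_mul (by norm_num) _]
    rw [Real.sqrt_inv]
    have hσ2eq : σ2 = σ * σ := by
      rw [hσ]; exact (Real.mul_self_sqrt hσ2pos.le).symm
    rw [← hσ]
    rw [hσ2eq]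
    field_simp
  rw [← hval]
  refine hLlim.congr' ?_
  filter_upwards [hIoo] with s hs
  -- prove the pointwise identity for s ∈ Ioo 0 1
  obtain ⟨hx, heq, -⟩ := hmin s ⟨hs.1.le, hs.2.le⟩
  have h1s : (0:ℝ) < 1 - s := by linarith [hs.2]
  have hsqpos : 0 < Real.sqrt (1 - s) := Real.sqrt_pos.mpr h1s
  have hHx : 0 < Hser p (h s) := lt_of_lt_of_le hcpos (Hser_ge hp hvar hx.1 hx.2)
  have hu0 : 0 ≤ 1 - h s := by linarith [hx.2]
  have hkey := key s hs
  have hueq : 1 - h s = Real.sqrt (1 - s) * Real.sqrt (phi q p (h s) / Hser p (h s)) := by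
    have hsq : (1 - h s)^2 = (1 - s) * (phi q p (h s) / Hser p (h s)) := by
      rw [← mul_div_assoc, eq_div_iff hHx.ne']
      linarith [hkey]
    calc 1 - h s = Real.sqrt ((1 - h s)^2) := (Real.sqrt_sq hu0).symm
      _ = Real.sqrt ((1 - s) * (phi q p (h s) / Hser p (h s))) := by rw [hsq]
      _ = Real.sqrt (1 - s) * Real.sqrt (phi q p (h s) / Hser p (h s)) :=
          Real.sqrt_mul h1s.le _
  have hGid := G_identity hp hmoment hvar hcrit hx.1 hx.2
  have hnum : 1 - s * phiDeriv p (h s)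
      = (1 - h s) * Gser p (h s) + (1 - s) * phiDeriv p (h s) := by
    linarith [hGid]
  rw [eq_comm, div_eq_iff hsqpos.ne', hnum, hueq]
  have h1seq : (1 - s) = Real.sqrt (1 - s) * Real.sqrt (1 - s) :=
    (Real.mul_self_sqrt h1s.le).symm
  linear_combination (phiDeriv p (h s)) * h1seq
end
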